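/- Let A be an s×s real matrix with Jordan decomposition A = S⁻¹ diag(Λ, 0) S where Λ collects the Jordan blocks for nonzero eigenvalues (so every zero eigenvalue of A is semisimple/regular), let Ω = A^D be the Drazin inverse of A, and let b ∈ ℝ^s lie in the row space of A, so bᵀ = vᵀA for some v. Then for |z| sufficiently large, z·bᵀ(I − zA)⁻¹ = −bᵀ Σ_{ℓ≥0} z^{−ℓ} Ω^{ℓ+1}. -/

import Mathlib

open Matrix

attribute [local instance] Matrix.linftyOpNormedRing
attribute [local instance] Matrix.linftyOpNormSMulClass

/-!
With `P = Ω A` the spectral projection onto the range of `A`, the resolvent splits as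
`(1 - z A)⁻¹ = (1 - P) - z⁻¹ Ω (1 - z⁻¹ Ω)⁻¹`: the first term is the (constant) contribution of
the semisimple zero eigenvalue, the second is a Neumann series in `z⁻¹ Ω` for `|z| > ‖Ω‖`.
A row vector `b = vᵀ A` satisfies `b P = b`, so it annihilates the first term.
-/

section Drazin

variable {𝕜 R : Type*} [Field 𝕜] [Ring R] [Algebra 𝕜 R] {A Ω : R}

theorem one_sub_smul_mul_eq_one_of_drazin (h1 : A * Ω * A = A) (h2 : Ω * A * Ω = Ω)
    (h3 : Commute A Ω) {z : 𝕜} (hz : z ≠ 0) {u : R} (hu : (1 - z⁻¹ • Ω) * u = 1) :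
    (1 - z • A) * (1 - Ω * A - z⁻¹ • (Ω * u)) = 1 := by
  have hP : (1 - z • A) * (1 - Ω * A) = 1 - Ω * A := by
    rw [sub_mul, one_mul, smul_mul_assoc, mul_sub, mul_one, ← mul_assoc, h1, sub_self, smul_zero,
      sub_zero]
  have hN : (1 - z • A) * (z⁻¹ • (Ω * u)) = z⁻¹ • (Ω * u) - Ω * A * u := by
    rw [sub_mul, one_mul, smul_mul_smul_comm, mul_inv_cancel₀ hz, one_smul, ← mul_assoc,
      h3.eq]
  have hPu : Ω * A = Ω * A * u - z⁻¹ • (Ω * u) := by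
    calc Ω * A = Ω * A * ((1 - z⁻¹ • Ω) * u) := by rw [hu, mul_one]
      _ = Ω * A * u - z⁻¹ • (Ω * u) := by
        rw [← mul_assoc, mul_sub, mul_one, mul_smul_comm, h2, sub_mul, smul_mul_assoc]
  rw [mul_sub, hP, hN, sub_sub_eq_add_sub, add_sub_assoc, ← hPu, sub_add_cancel]

end Drazin

theorem Matrix.linftyOp_hasSummableGeomSeries (n : Type*) [Fintype n] [DecidableEq n] :
    HasSummableGeomSeries (Matrix n n ℝ) :=
  -- instance search finds `CompleteSpace` only for the product uniformity, not the `linftyOp` one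
  @instHasSummableGeomSeriesOfCompleteSpace _ _
    (by exact (inferInstance : CompleteSpace (Matrix n n ℝ)))

theorem Matrix.neg_smul_vecMul_one_sub_sub_smul {K n : Type*} [Field K] [Fintype n]
    [DecidableEq n]
    {A Ω M : Matrix n n K} {b v : n → K} (h1 : A * Ω * A = A) (hb : b = v ᵥ* A) {z : K}
    (hz : z ≠ 0) : -(z • (b ᵥ* (1 - Ω * A - z⁻¹ • M))) = b ᵥ* M := by
  have hbP : b ᵥ* (1 - Ω * A) = 0 := by
    rw [hb, vecMul_vecMul, mul_sub, mul_one, ← mul_assoc, h1, sub_self, vecMul_zero]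
  rw [vecMul_sub, hbP, vecMul_smul, zero_sub, smul_neg, neg_neg, smul_smul,
    mul_inv_cancel₀ hz, one_smul]

/-- If `Ω` is the (index-1) Drazin inverse of `A` (so every zero eigenvalue of
`A` is semisimple) and `bᵀ = vᵀA`, then for `|z|` sufficiently large,
`z·bᵀ(I − zA)⁻¹ = −bᵀ Σ_{ℓ≥0} z^{−ℓ} Ω^{ℓ+1}`. -/
theorem resolvent_laurent_drazin
    (s : ℕ) (A Ω : Matrix (Fin s) (Fin s) ℝ) (b v : Fin s → ℝ)
    (hDrazin1 : A * Ω * A = A) (hDrazin2 : Ω * A * Ω = Ω) (hDrazin3 : A * Ω = Ω * A)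
    (hb : b = v ᵥ* A) :
    ∃ R : ℝ, 0 < R ∧ ∀ z : ℝ, R < |z| →
      HasSum (fun ℓ : ℕ => (z⁻¹) ^ ℓ • (b ᵥ* Ω ^ (ℓ + 1)))
        (-(z • (b ᵥ* (1 - z • A)⁻¹))) := by
  refine ⟨‖Ω‖ + 1, by positivity, fun z hz => ?_⟩
  have hz0 : z ≠ 0 := abs_pos.mp (lt_of_le_of_lt (by positivity) hz)
  have hsmall : ‖z⁻¹ • Ω‖ < 1 := by
    rw [norm_smul, Real.norm_eq_abs, abs_inv, inv_mul_lt_one₀ (abs_pos.mpr hz0)]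
    linarith
  have := Matrix.linftyOp_hasSummableGeomSeries (Fin s)
  have hinv : (1 - z • A)⁻¹ = 1 - Ω * A - z⁻¹ • (Ω * ∑' n, (z⁻¹ • Ω) ^ n) :=
    inv_eq_right_inv <| one_sub_smul_mul_eq_one_of_drazin hDrazin1 hDrazin2 hDrazin3 hz0
      (mul_neg_geom_series _ hsmall)
  rw [hinv, neg_smul_vecMul_one_sub_sub_smul hDrazin1 hb hz0]
  have hsum : HasSum (fun n => b ᵥ* (Ω * (z⁻¹ • Ω) ^ n)) (b ᵥ* (Ω * ∑' n, (z⁻¹ • Ω) ^ n)) :=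
    ((summable_geometric_of_norm_lt_one hsmall).hasSum.mul_left Ω).map
      (vecMulBilin ℝ ℝ b) (LinearMap.continuous_of_finiteDimensional _)
  convert hsum using 2 with n
  rw [smul_pow, mul_smul_comm, ← pow_succ', vecMul_smul]
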